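/- The relation ≤_L on admissible labelings of a JSBAF, defined by L₁ ≤_L L₂ iff in(L₁) ⊆ in(L₂) and out(L₁) ⊆ out(L₂), is a partial order, and for any two admissible labelings L₁, L₂ with in(L₁) ⊆ in(L₂), one has out(L₁) ⊆ out(L₂). -/

import Mathlib

namespace JS

inductive Lab : Type
  | IN | OUT | UNDEC
deriving DecidableEq

structure JSBAF (A : Type) where
  att : A → A → Prop
  supp : Set A → A → Prop
  pref : A → A → Prop

variable {A : Type}

/-- Strict arguments: supported by the empty set or only by strict arguments. -/
inductive Strict (J : JSBAF A) : A → Prop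
  | mk (S : Set A) (a : A) (h : J.supp S a) (hS : ∀ b ∈ S, Strict J b) : Strict J a

/-- Structural restrictions on JSBAFs. -/
structure Restr (J : JSBAF A) : Prop where
  finSupp : ∀ S b, J.supp S b → S.Finite
  uniqSupp : ∀ S S' b, J.supp S b → J.supp S' b → S = S'
  acyc : ∀ a, ¬ Relation.TransGen (fun x y => ∃ S, J.supp S y ∧ x ∈ S) a a
  strictUnatt : ∀ a b, Strict J b → ¬ J.att a b
  prefRefl : ∀ a, J.pref a a
  prefTrans : ∀ a b c, J.pref a b → J.pref b c → J.pref a c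
  prefTotal : ∀ a b, J.pref a b ∨ J.pref b a
  strictEq : ∀ a b, Strict J a → Strict J b → J.pref a b
  strictTop : ∀ a b, ¬ Strict J a → Strict J b → J.pref a b ∧ ¬ J.pref b a

def inL (L : A → Lab) : Set A := {a | L a = Lab.IN}
def outL (L : A → Lab) : Set A := {a | L a = Lab.OUT}
def undecL (L : A → Lab) : Set A := {a | L a = Lab.UNDEC}

/-- Definition 2, item 1: legally IN. -/
def legallyIn (J : JSBAF A) (L : A → Lab) (a : A) : Prop :=
  (∀ b, J.att b a → L b = Lab.OUT) ∧
  ∀ S c, J.supp S c → a ∈ S → (∀ b ∈ S, b ≠ a → J.pref a b) →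
    (L c = Lab.IN ∨
     (L c = Lab.UNDEC ∧ ∃ b ∈ S, b ≠ a ∧ (L b = Lab.OUT ∨ L b = Lab.UNDEC)) ∨
     (L c = Lab.OUT ∧
       ((∃ b ∈ S, b ≠ a ∧ L b = Lab.OUT) ∨
        (∃ b₁ ∈ S, ∃ b₂ ∈ S, b₁ ≠ a ∧ b₂ ≠ a ∧ b₁ ≠ b₂ ∧
          L b₁ = Lab.UNDEC ∧ L b₂ = Lab.UNDEC))))

/-- Definition 2, item 2: legally OUT. -/
def legallyOut (J : JSBAF A) (L : A → Lab) (a : A) : Prop :=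
  (∃ b, J.att b a ∧ L b = Lab.IN) ∨
  (∃ (n : ℕ) (S : ℕ → Set A) (b : ℕ → A),
    (∀ i ≤ n, J.supp (S i) (b i)) ∧
    (∀ i < n, b i ∈ S (i + 1)) ∧
    a ∈ S 0 ∧
    (∀ d ∈ S 0, d ≠ a → L d = Lab.IN) ∧
    (∃ c, J.att c (b n) ∧ L c = Lab.IN) ∧
    (∀ i ≤ n, L (b i) = Lab.OUT) ∧
    (∀ i, 1 ≤ i → i ≤ n → ∀ d ∈ S i, d ≠ b (i - 1) → L d = Lab.IN) ∧
    (∀ d ∈ S 0, d ≠ a → J.pref a d))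

/-- Admissible labelings. -/
def Admissible (J : JSBAF A) (L : A → Lab) : Prop :=
  (∀ a, L a = Lab.IN → legallyIn J L a) ∧
  (∀ a, L a = Lab.OUT ↔ legallyOut J L a) ∧
  (∀ a, Strict J a → L a = Lab.IN)

/-- Preferred labelings: maximal admissible w.r.t. inclusion of IN-sets. -/
def Preferred (J : JSBAF A) (L : A → Lab) : Prop :=
  Admissible J L ∧ ∀ L', Admissible J L' → ¬ (inL L ⊂ inL L')

/-- The iterated OUT-sets of the SIM labeling. -/
def simO (J : JSBAF A) : ℕ → Set A
  | 0 => {a | ∃ b, Strict J b ∧ J.att b a}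
  | n + 1 => simO J n ∪
      {a | ∃ S c, J.supp S c ∧ a ∈ S ∧ c ∈ simO J n ∧ ∀ d ∈ S, d ≠ a → Strict J d}

def simIn (J : JSBAF A) : Set A := {a | Strict J a}
def simOut (J : JSBAF A) : Set A := ⋃ n, simO J n

open Classical in
/-- The strict-including-minimal labeling. -/
noncomputable def SIM (J : JSBAF A) : A → Lab := fun a =>
  if Strict J a then Lab.IN else if a ∈ simOut J then Lab.OUT else Lab.UNDEC

/-- The order on labelings. -/
def leL (L₁ L₂ : A → Lab) : Prop := inL L₁ ⊆ inL L₂ ∧ outL L₁ ⊆ outL L₂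

end JS

/-!
An argument that is OUT in `L₁` is attacked by an IN argument, or starts a support chain
`a ∈ S 0`, `b 0 ∈ S 1`, …, `b (n - 1) ∈ S n` whose end `b n` is attacked by an IN argument.
IN arguments of `L₁` stay IN in `L₂`, so it suffices that every `b i` is OUT in `L₂`, which
follows backwards along the chain: `b n` is attacked by an IN argument, and if `b (i + 1)` is
OUT then either `b i` is the weakest member of `S (i + 1)`, and the rest of the chain shows
it legally OUT, or the weakest member is IN, and being legally IN it forces `b i` to be OUT.
-/

theorem Set.Finite.exists_rel_forall_of_total {α : Type*} {r : α → α → Prop}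
    (total : ∀ a b, r a b ∨ r b a) (trans : ∀ a b c, r a b → r b c → r a c)
    {s : Set α} (hs : s.Finite) (hne : s.Nonempty) : ∃ m ∈ s, ∀ d ∈ s, r m d := by
  induction s, hs using Set.Finite.induction_on with
  | empty => exact absurd hne Set.not_nonempty_empty
  | @insert a s _ _ ih =>
    have hrefl : r a a := (total a a).elim id id
    rcases s.eq_empty_or_nonempty with rfl | hs
    · exact ⟨a, Set.mem_insert a ∅, by simpa using hrefl⟩
    obtain ⟨m, hm, hmin⟩ := ih hs
    rcases total m a with hma | ham
    · exact ⟨m, Set.mem_insert_of_mem a hm, Set.forall_mem_insert.2 ⟨hma, hmin⟩⟩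
    · exact ⟨a, Set.mem_insert a s,
        Set.forall_mem_insert.2 ⟨hrefl, fun d hd => trans a m d ham (hmin d hd)⟩⟩

namespace JS

variable {A : Type} {J : JSBAF A}

theorem Restr.exists_pref_min (hR : Restr J) {S : Set A} {c a : A} (hS : J.supp S c)
    (ha : a ∈ S) : ∃ m ∈ S, ∀ d ∈ S, J.pref m d :=
  (hR.finSupp S c hS).exists_rel_forall_of_total hR.prefTotal hR.prefTrans ⟨a, ha⟩

/-- The chain of the second clause of `legallyOut`, without its conditions on `S 0`, on the attack
on `b n` and on the labels of the `b i`. -/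
def SuppChain (J : JSBAF A) (L : A → Lab) (n : ℕ) (S : ℕ → Set A) (b : ℕ → A) : Prop :=
  (∀ i ≤ n, J.supp (S i) (b i)) ∧ (∀ i < n, b i ∈ S (i + 1)) ∧
    ∀ i, 1 ≤ i → i ≤ n → ∀ d ∈ S i, d ≠ b (i - 1) → L d = Lab.IN

theorem SuppChain.mono {L₁ L₂ : A → Lab} {n : ℕ} {S : ℕ → Set A} {b : ℕ → A}
    (h : SuppChain J L₁ n S b) (hin : inL L₁ ⊆ inL L₂) : SuppChain J L₂ n S b :=
  ⟨h.1, h.2.1, fun i h1 hn d hd hne => hin (h.2.2 i h1 hn d hd hne)⟩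

theorem SuppChain.tail {L : A → Lab} {n : ℕ} {S : ℕ → Set A} {b : ℕ → A}
    (h : SuppChain J L (n + 1) S b) :
    SuppChain J L n (fun i => S (i + 1)) (fun i => b (i + 1)) := by
  refine ⟨fun i hi => h.1 (i + 1) (by omega), fun i hi => h.2.1 (i + 1) (by omega), ?_⟩
  intro i h1 hn d hd hne
  exact h.2.2 (i + 1) (by omega) (by omega) d hd (by rwa [show i + 1 - 1 = i - 1 + 1 by omega])

theorem legallyOut_of_suppChain {L : A → Lab} {a : A} {n : ℕ} {S : ℕ → Set A} {b : ℕ → A}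
    (h : SuppChain J L n S b) (ha : a ∈ S 0) (hS₀ : ∀ d ∈ S 0, d ≠ a → L d = Lab.IN)
    (hatt : ∃ c, J.att c (b n) ∧ L c = Lab.IN) (hout : ∀ i ≤ n, L (b i) = Lab.OUT)
    (hmin : ∀ d ∈ S 0, d ≠ a → J.pref a d) : legallyOut J L a :=
  Or.inr ⟨n, S, b, h.1, h.2.1, ha, hS₀, hatt, hout, h.2.2, hmin⟩

theorem Admissible.out_of_weaker_mem_supp {L : A → Lab} (hL : Admissible J L) {S : Set A}
    {a c m : A} (hS : J.supp S c) (hc : L c = Lab.OUT) (hS_in : ∀ d ∈ S, d ≠ a → L d = Lab.IN)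
    (hm : m ∈ S) (hma : m ≠ a) (hmin : ∀ d ∈ S, J.pref m d) : L a = Lab.OUT := by
  have hm_in : L m = Lab.IN := hS_in m hm hma
  have not_in : ∀ d ∈ S, L d ≠ Lab.IN → d = a := fun d hd h =>
    by_contra fun hne => h (hS_in d hd hne)
  rcases (hL.1 m hm_in).2 S c hS hm (fun d hd _ => hmin d hd) with
    h | ⟨h, _⟩ | ⟨_, ⟨d, hd, _, hd_out⟩ | ⟨d₁, hd₁, d₂, hd₂, _, _, hne, hu₁, hu₂⟩⟩
  · simp [hc] at h
  · simp [hc] at h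
  · rwa [← not_in d hd (by simp [hd_out])]
  · exact absurd ((not_in d₁ hd₁ (by simp [hu₁])).trans (not_in d₂ hd₂ (by simp [hu₂])).symm) hne

theorem Admissible.suppChain_out (hR : Restr J) {L : A → Lab} (hL : Admissible J L)
    {n : ℕ} {S : ℕ → Set A} {b : ℕ → A} (h : SuppChain J L n S b)
    (hatt : ∃ c, J.att c (b n) ∧ L c = Lab.IN) : ∀ i ≤ n, L (b i) = Lab.OUT := by
  induction n generalizing S b with
  | zero =>
    intro i hi
    obtain rfl : i = 0 := by omega
    exact (hL.2.1 _).2 (Or.inl hatt)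
  | succ n ih =>
    have htail := ih h.tail hatt
    have hS₁ : ∀ d ∈ S 1, d ≠ b 0 → L d = Lab.IN := h.2.2 1 le_rfl (by omega)
    have hb₀ : L (b 0) = Lab.OUT := by
      obtain ⟨m, hm, hmin⟩ := hR.exists_pref_min (h.1 1 (by omega)) (h.2.1 0 (by omega))
      by_cases hmb : m = b 0
      · subst hmb
        exact (hL.2.1 _).2
          (legallyOut_of_suppChain h.tail hm hS₁ hatt htail fun d hd _ => hmin d hd)
      · exact hL.out_of_weaker_mem_supp (h.1 1 (by omega)) (htail 0 (by omega)) hS₁ hm hmb hmin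
    rintro (_ | i) hi
    exacts [hb₀, htail i (by omega)]

theorem Admissible.outL_subset_of_inL_subset (hR : Restr J) {L₁ L₂ : A → Lab}
    (h₁ : Admissible J L₁) (h₂ : Admissible J L₂) (hin : inL L₁ ⊆ inL L₂) :
    outL L₁ ⊆ outL L₂ := by
  intro a ha
  refine (h₂.2.1 a).2 ?_
  rcases (h₁.2.1 a).1 ha with
    ⟨c, hc, hc_in⟩ | ⟨n, S, b, hsupp, hmem, ha, hS₀, ⟨c, hc, hc_in⟩, -, hinner, hmin⟩
  · exact Or.inl ⟨c, hc, hin hc_in⟩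
  · have hchain : SuppChain J L₂ n S b := SuppChain.mono ⟨hsupp, hmem, hinner⟩ hin
    have hatt : ∃ c, J.att c (b n) ∧ L₂ c = Lab.IN := ⟨c, hc, hin hc_in⟩
    exact legallyOut_of_suppChain hchain ha (fun d hd hne => hin (hS₀ d hd hne)) hatt
      (h₂.suppChain_out hR hchain hatt) hmin

theorem leL_antisymm {L₁ L₂ : A → Lab} (h₁₂ : leL L₁ L₂) (h₂₁ : leL L₂ L₁) : L₁ = L₂ := by
  funext a
  have hin : L₁ a = Lab.IN ↔ L₂ a = Lab.IN := ⟨@h₁₂.1 a, @h₂₁.1 a⟩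
  have hout : L₁ a = Lab.OUT ↔ L₂ a = Lab.OUT := ⟨@h₁₂.2 a, @h₂₁.2 a⟩
  cases h₁ : L₁ a <;> cases h₂ : L₂ a <;> simp_all

end JS

open JS in
/-- The relation ≤_L on admissible labelings (inclusion of IN-sets and of OUT-sets)
is a partial order, and for admissible labelings, inclusion of IN-sets already implies inclusion
of OUT-sets. -/
theorem leL_partialOrder {A : Type} (J : JSBAF A) (hR : Restr J) :
    (∀ L : A → Lab, Admissible J L → leL L L) ∧
    (∀ L₁ L₂ L₃ : A → Lab, Admissible J L₁ → Admissible J L₂ → Admissible J L₃ →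
      leL L₁ L₂ → leL L₂ L₃ → leL L₁ L₃) ∧
    (∀ L₁ L₂ : A → Lab, Admissible J L₁ → Admissible J L₂ →
      leL L₁ L₂ → leL L₂ L₁ → L₁ = L₂) ∧
    (∀ L₁ L₂ : A → Lab, Admissible J L₁ → Admissible J L₂ →
      inL L₁ ⊆ inL L₂ → outL L₁ ⊆ outL L₂) :=
  ⟨fun _ _ => ⟨subset_rfl, subset_rfl⟩,
    fun _ _ _ _ _ _ h₁₂ h₂₃ => ⟨h₁₂.1.trans h₂₃.1, h₁₂.2.trans h₂₃.2⟩,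
    fun _ _ _ _ => leL_antisymm,
    fun _ _ h₁ h₂ => h₁.outL_subset_of_inL_subset hR h₂⟩
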